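/- arXiv:2509.11618 — 2 statements merged into one kernel-verified Lean document; each statement's English description precedes it below -/
import Mathlib

section
/- Suppose: (i) for all x, y ∈ ℝ^d and t ∈ [0,T], 2⟨Px − Py, A_t⁻ F(t,x) − A_t⁻ F(t,y)⟩ + (p₁ − 1) |A_t⁻ G(t,x) − A_t⁻ G(t,y)|² ≤ L₁ |x − y|²; (ii) V̂ : [0,T] × ℝ^d → ℝ^d satisfies A_t V̂(t,x) + R F(t, x + V̂(t,x)) = 0 for all (t,x) and |V̂(t,x) − V̂(t,y)| ≤ L̂ |x − y| for all t, x, y. Define f(t,x) := A_t⁻ F(t, x + V̂(t,x)) and g(t,x) := A_t⁻ G(t, x + V̂(t,x)). Then for all x, y ∈ ℝ^d and t ∈ [0,T]: 2⟨x − y, f(t,x) − f(t,y)⟩ + (p₁ − 1) |g(t,x) − g(t,y)|² ≤ 2 L₁ (1 + L̂²) |x − y|². -/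
/-!
Since `A_t⁻ R = 0`, applying `A_t⁻` to the equation for `V̂` gives `P V̂ = 0`, so
`P (x + V̂(t,x)) − P (y + V̂(t,y)) = P (x − y)`. As `P` is symmetric and fixes the range of `A_t⁻`,
the drift term of (i) at the shifted points equals `⟨x − y, f(t,x) − f(t,y)⟩`. Hence the left-hand
side is bounded by `L₁ |x + V̂(t,x) − y − V̂(t,y)|² ≤ L₁ (1 + L̂)² |x − y|² ≤ 2 L₁ (1 + L̂²) |x − y|²`.
-/

open Matrix

/-- Euclidean norm of a vector in `ℝ^d`. -/
noncomputable def vnorm {d : ℕ} (x : Fin d → ℝ) : ℝ :=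
  Real.sqrt (∑ i, (x i) ^ 2)

/-- Euclidean inner product on `ℝ^d`. -/
def vdot {d : ℕ} (x y : Fin d → ℝ) : ℝ := ∑ i, x i * y i

/-- Frobenius norm of a real matrix: `|B| = sqrt (trace (Bᵀ * B))`. -/
noncomputable def mnorm {d m : ℕ} (B : Matrix (Fin d) (Fin m) ℝ) : ℝ :=
  Real.sqrt ((Bᵀ * B).trace)

lemma vnorm_eq_norm_toLp {d : ℕ} (x : Fin d → ℝ) : vnorm x = ‖WithLp.toLp 2 x‖ := by
  simp [vnorm, EuclideanSpace.norm_eq, sq_abs]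

lemma vnorm_nonneg {d : ℕ} (x : Fin d → ℝ) : 0 ≤ vnorm x := Real.sqrt_nonneg _

lemma vnorm_add_le {d : ℕ} (x y : Fin d → ℝ) : vnorm (x + y) ≤ vnorm x + vnorm y := by
  simpa only [vnorm_eq_norm_toLp, WithLp.toLp_add] using norm_add_le _ _

lemma vnorm_add_sub_add_le_of_le {d : ℕ} {L : ℝ} {x y u v : Fin d → ℝ}
    (huv : vnorm (u - v) ≤ L * vnorm (x - y)) :
    vnorm (x + u - (y + v)) ≤ (1 + L) * vnorm (x - y) :=
  calc vnorm (x + u - (y + v)) = vnorm ((x - y) + (u - v)) := by rw [add_sub_add_comm]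
    _ ≤ vnorm (x - y) + vnorm (u - v) := vnorm_add_le _ _
    _ ≤ (1 + L) * vnorm (x - y) := by linarith

lemma sq_le_two_mul_one_add_sq_mul_sq {a b c : ℝ} (ha : 0 ≤ a) (hab : a ≤ (1 + c) * b) :
    a ^ 2 ≤ 2 * (1 + c ^ 2) * b ^ 2 := by
  nlinarith [pow_le_pow_left₀ ha hab 2, sq_nonneg ((1 - c) * b)]

section PseudoInverse

variable {n R : Type*} [Fintype n] [CommRing R]

lemma pinv_mul_mulVec_eq_zero [DecidableEq n] {A Am : Matrix n n R} (hAm : Am * A * Am = Am)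
    {v w : n → R} (h : A *ᵥ v + (1 - A * Am) *ᵥ w = 0) : (Am * A) *ᵥ v = 0 := by
  have hR : Am * (1 - A * Am) = 0 := by rw [mul_sub, mul_one, ← mul_assoc, hAm, sub_self]
  simpa [mulVec_add, mulVec_mulVec, hR] using congrArg (Am *ᵥ ·) h

lemma mulVec_dotProduct_mulVec_of_mul_eq {P B : Matrix n n R} (hP : Pᵀ = P) (hPB : P * B = B)
    (z u : n → R) : (P *ᵥ z) ⬝ᵥ (B *ᵥ u) = z ⬝ᵥ (B *ᵥ u) := by
  rw [← vecMul_transpose, ← dotProduct_mulVec, hP, mulVec_mulVec, hPB]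

end PseudoInverse

theorem stmt8_general (T : ℝ) (d m : ℕ)
    (L1 p1 Lhat : ℝ) (hL1 : 0 < L1)
    (A Am : ℝ → Matrix (Fin d) (Fin d) ℝ)
    -- `Am t` is the Moore–Penrose pseudoinverse of `A t`
    (hPI : ∀ t ∈ Set.Icc (0:ℝ) T, A t * Am t * A t = A t ∧ Am t * A t * Am t = Am t ∧
      (A t * Am t)ᵀ = A t * Am t ∧ (Am t * A t)ᵀ = Am t * A t)
    (F : ℝ → (Fin d → ℝ) → Fin d → ℝ)
    (G : ℝ → (Fin d → ℝ) → Matrix (Fin d) (Fin m) ℝ)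
    -- (i) coupled monotonicity condition, with `P = A_t⁻ A_t`
    (hmono : ∀ t ∈ Set.Icc (0:ℝ) T, ∀ x y : Fin d → ℝ,
      2 * vdot ((Am t * A t).mulVec x - (Am t * A t).mulVec y)
          ((Am t).mulVec (F t x) - (Am t).mulVec (F t y)) +
        (p1 - 1) * mnorm (Am t * G t x - Am t * G t y) ^ 2 ≤
        L1 * vnorm (x - y) ^ 2)
    (V : ℝ → (Fin d → ℝ) → Fin d → ℝ)
    -- (ii) `A_t V̂(t,x) + R F(t, x + V̂(t,x)) = 0` with `R = I − A_t A_t⁻`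
    (hveq : ∀ t ∈ Set.Icc (0:ℝ) T, ∀ x : Fin d → ℝ,
      (A t).mulVec (V t x) + (1 - A t * Am t).mulVec (F t (x + V t x)) = 0)
    -- (ii) `|V̂(t,x) − V̂(t,y)| ≤ L̂ |x − y|`
    (hlip : ∀ t ∈ Set.Icc (0:ℝ) T, ∀ x y : Fin d → ℝ,
      vnorm (V t x - V t y) ≤ Lhat * vnorm (x - y)) :
    -- with `f(t,x) = A_t⁻ F(t, x + V̂(t,x))` and `g(t,x) = A_t⁻ G(t, x + V̂(t,x))`
    ∀ t ∈ Set.Icc (0:ℝ) T, ∀ x y : Fin d → ℝ,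
      2 * vdot (x - y)
          ((Am t).mulVec (F t (x + V t x)) - (Am t).mulVec (F t (y + V t y))) +
        (p1 - 1) * mnorm (Am t * G t (x + V t x) - Am t * G t (y + V t y)) ^ 2 ≤
        2 * L1 * (1 + Lhat ^ 2) * vnorm (x - y) ^ 2 := by
  intro t ht x y
  obtain ⟨-, hAmAAm, -, hPsymm⟩ := hPI t ht
  have hPV (z : Fin d → ℝ) : (Am t * A t) *ᵥ V t z = 0 :=
    pinv_mul_mulVec_eq_zero hAmAAm (hveq t ht z)
  have hdrift : vdot ((Am t * A t) *ᵥ (x + V t x) - (Am t * A t) *ᵥ (y + V t y))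
      (Am t *ᵥ F t (x + V t x) - Am t *ᵥ F t (y + V t y)) =
      vdot (x - y) (Am t *ᵥ F t (x + V t x) - Am t *ᵥ F t (y + V t y)) := by
    rw [mulVec_add, mulVec_add, hPV, hPV, add_zero, add_zero, ← mulVec_sub, ← mulVec_sub]
    exact mulVec_dotProduct_mulVec_of_mul_eq hPsymm hAmAAm _ _
  have hdist := vnorm_add_sub_add_le_of_le (hlip t ht x y)
  calc _ = _ := by rw [← hdrift]
    _ ≤ L1 * vnorm (x + V t x - (y + V t y)) ^ 2 := hmono t ht _ _
    _ ≤ L1 * (2 * (1 + Lhat ^ 2) * vnorm (x - y) ^ 2) := by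
      gcongr
      exact sq_le_two_mul_one_add_sq_mul_sq (vnorm_nonneg _) hdist
    _ = _ := by ring

theorem stmt8 (T : ℝ) (hT : 0 < T) (d m : ℕ) (hd : 1 ≤ d) (hm : 1 ≤ m)
    (L1 p1 Lhat : ℝ) (hL1 : 0 < L1) (hp1 : 1 < p1) (hLhat : 0 < Lhat)
    (A Am : ℝ → Matrix (Fin d) (Fin d) ℝ)
    -- `Am t` is the Moore–Penrose pseudoinverse of `A t`
    (hPI : ∀ t ∈ Set.Icc (0:ℝ) T, A t * Am t * A t = A t ∧ Am t * A t * Am t = Am t ∧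
      (A t * Am t)ᵀ = A t * Am t ∧ (Am t * A t)ᵀ = Am t * A t)
    (F : ℝ → (Fin d → ℝ) → Fin d → ℝ)
    (G : ℝ → (Fin d → ℝ) → Matrix (Fin d) (Fin m) ℝ)
    -- (i) coupled monotonicity condition, with `P = A_t⁻ A_t`
    (hmono : ∀ t ∈ Set.Icc (0:ℝ) T, ∀ x y : Fin d → ℝ,
      2 * vdot ((Am t * A t).mulVec x - (Am t * A t).mulVec y)
          ((Am t).mulVec (F t x) - (Am t).mulVec (F t y)) +
        (p1 - 1) * mnorm (Am t * G t x - Am t * G t y) ^ 2 ≤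
        L1 * vnorm (x - y) ^ 2)
    (V : ℝ → (Fin d → ℝ) → Fin d → ℝ)
    -- (ii) `A_t V̂(t,x) + R F(t, x + V̂(t,x)) = 0` with `R = I − A_t A_t⁻`
    (hveq : ∀ t ∈ Set.Icc (0:ℝ) T, ∀ x : Fin d → ℝ,
      (A t).mulVec (V t x) + (1 - A t * Am t).mulVec (F t (x + V t x)) = 0)
    -- (ii) `|V̂(t,x) − V̂(t,y)| ≤ L̂ |x − y|`
    (hlip : ∀ t ∈ Set.Icc (0:ℝ) T, ∀ x y : Fin d → ℝ,
      vnorm (V t x - V t y) ≤ Lhat * vnorm (x - y)) :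
    -- with `f(t,x) = A_t⁻ F(t, x + V̂(t,x))` and `g(t,x) = A_t⁻ G(t, x + V̂(t,x))`
    ∀ t ∈ Set.Icc (0:ℝ) T, ∀ x y : Fin d → ℝ,
      2 * vdot (x - y)
          ((Am t).mulVec (F t (x + V t x)) - (Am t).mulVec (F t (y + V t y))) +
        (p1 - 1) * mnorm (Am t * G t (x + V t x) - Am t * G t (y + V t y)) ^ 2 ≤
        2 * L1 * (1 + Lhat ^ 2) * vnorm (x - y) ^ 2 :=
  stmt8_general T d m L1 p1 Lhat hL1 A Am hPI F G hmono V hveq hlip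
end

section
/- Fix T > 0 and for t ∈ [0,T] let A_t := diag(1/(2(t²+1)), 10, 0) ∈ ℝ^{3×3}, and for x = (x₁, x₂, x₃)ᵀ ∈ ℝ³ let F(t,x) := (−x₁³, x₃, t x₂ + x₃)ᵀ and G(t,x) := diag(sin t, c x₁², 0). If c ∈ ℝ and p₂ > 0 satisfy p₂ c² ≤ 3/(4(T² + 1)), then for all t ∈ [0,T] and x, y ∈ ℝ³: 2⟨A_t x − A_t y, F(t,x) − F(t,y)⟩ + p₂ |G(t,x) − G(t,y)|² ≤ 10 |x − y|². -/
/-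
The drift term splits coordinatewise. In the first coordinate the monotone cubic gives
`-(x₁ - y₁)(x₁³ - y₁³)/(t² + 1)`, which absorbs the noise term
`p₂ c² (x₁² - y₁²)² ≤ ¾ (x₁² - y₁²)²/(t² + 1)` because `x² + xy + y² ≥ ¾ (x + y)²`;
the coupling `20 (x₂ - y₂)(x₃ - y₃)` is at most `10 ((x₂ - y₂)² + (x₃ - y₃)²)`.
-/

open Matrix

/-- `A_t = diag(1/(2(t²+1)), 10, 0)`. -/
noncomputable def A19 (t : ℝ) : Matrix (Fin 3) (Fin 3) ℝ :=
  Matrix.diagonal ![1 / (2 * (t ^ 2 + 1)), 10, 0]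

/-- `F(t,x) = (−x₁³, x₃, t x₂ + x₃)ᵀ`. -/
def F19 (t : ℝ) (x : Fin 3 → ℝ) : Fin 3 → ℝ := ![-(x 0) ^ 3, x 2, t * x 1 + x 2]

/-- `G(t,x) = diag(sin t, c x₁², 0)`. -/
noncomputable def G19 (c : ℝ) (t : ℝ) (x : Fin 3 → ℝ) : Matrix (Fin 3) (Fin 3) ℝ :=
  Matrix.diagonal ![Real.sin t, c * (x 0) ^ 2, 0]

lemma vnorm_sq {d : ℕ} (x : Fin d → ℝ) : vnorm x ^ 2 = ∑ i, x i ^ 2 :=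
  Real.sq_sqrt (by positivity)

lemma mnorm_diagonal_sq {d : ℕ} (v : Fin d → ℝ) : mnorm (diagonal v) ^ 2 = ∑ i, v i ^ 2 := by
  rw [mnorm, diagonal_transpose, diagonal_mul_diagonal, trace_diagonal]
  simp only [← sq]
  exact Real.sq_sqrt (by positivity)

lemma sq_sub_sq_sq_le_sub_mul_pow_three_sub (a b : ℝ) :
    3 / 4 * (a ^ 2 - b ^ 2) ^ 2 ≤ (a - b) * (a ^ 3 - b ^ 3) := by
  -- the difference is `(a - b)² (a² + ab + b² - ¾ (a + b)²) = ¼ (a - b)⁴`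
  nlinarith [mul_nonneg (sq_nonneg (a - b)) (sq_nonneg (a - b))]

lemma two_vdot_A19_F19 (t : ℝ) (x y : Fin 3 → ℝ) :
    2 * vdot ((A19 t).mulVec x - (A19 t).mulVec y) (F19 t x - F19 t y) =
      -((x 0 - y 0) * (x 0 ^ 3 - y 0 ^ 3)) / (t ^ 2 + 1) + 20 * (x 1 - y 1) * (x 2 - y 2) := by
  have : t ^ 2 + 1 ≠ 0 := by positivity
  simp only [vdot, A19, F19, mulVec_diagonal, Pi.sub_apply, Fin.sum_univ_three,
    cons_val_zero, cons_val_one, cons_val_two, head_cons, tail_cons]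
  field_simp
  ring

lemma mnorm_G19_sub_sq (c t : ℝ) (x y : Fin 3 → ℝ) :
    mnorm (G19 c t x - G19 c t y) ^ 2 = c ^ 2 * (x 0 ^ 2 - y 0 ^ 2) ^ 2 := by
  rw [G19, G19, diagonal_sub, mnorm_diagonal_sq, Fin.sum_univ_three]
  simp only [cons_val_zero, cons_val_one, cons_val_two, head_cons, tail_cons]
  ring

lemma mul_sq_add_one_le_of_mem_Icc {a T t : ℝ} (ha : 0 ≤ a) (h : a ≤ 3 / (4 * (T ^ 2 + 1)))
    (ht : t ∈ Set.Icc 0 T) : a * (t ^ 2 + 1) ≤ 3 / 4 := by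
  have htT : t ^ 2 ≤ T ^ 2 := pow_le_pow_left₀ ht.1 ht.2 2
  calc a * (t ^ 2 + 1) ≤ a * (T ^ 2 + 1) := by gcongr
    _ ≤ 3 / 4 := by
      have := (le_div_iff₀ (by positivity)).mp h
      linarith

theorem stmt19_general (T : ℝ) (c p2 : ℝ) (hp2 : 0 < p2)
    (hc : p2 * c ^ 2 ≤ 3 / (4 * (T ^ 2 + 1))) :
    ∀ t ∈ Set.Icc (0:ℝ) T, ∀ x y : Fin 3 → ℝ,
      2 * vdot ((A19 t).mulVec x - (A19 t).mulVec y) (F19 t x - F19 t y) +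
        p2 * mnorm (G19 c t x - G19 c t y) ^ 2 ≤
        10 * vnorm (x - y) ^ 2 := by
  intro t ht x y
  rw [two_vdot_A19_F19, mnorm_G19_sub_sq, vnorm_sq, Fin.sum_univ_three]
  simp only [Pi.sub_apply]
  have hs : 0 < t ^ 2 + 1 := by positivity
  have hnoise : p2 * (c ^ 2 * (x 0 ^ 2 - y 0 ^ 2) ^ 2) ≤
      (x 0 - y 0) * (x 0 ^ 3 - y 0 ^ 3) / (t ^ 2 + 1) := by
    rw [le_div_iff₀ hs]
    calc p2 * (c ^ 2 * (x 0 ^ 2 - y 0 ^ 2) ^ 2) * (t ^ 2 + 1)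
        = p2 * c ^ 2 * (t ^ 2 + 1) * (x 0 ^ 2 - y 0 ^ 2) ^ 2 := by ring
      _ ≤ 3 / 4 * (x 0 ^ 2 - y 0 ^ 2) ^ 2 := by
        gcongr
        exact mul_sq_add_one_le_of_mem_Icc (mul_nonneg hp2.le (sq_nonneg c)) hc ht
      _ ≤ (x 0 - y 0) * (x 0 ^ 3 - y 0 ^ 3) := sq_sub_sq_sq_le_sub_mul_pow_three_sub _ _
  rw [neg_div]
  linarith [sq_nonneg (x 0 - y 0), sq_nonneg (x 1 - y 1 - (x 2 - y 2))]

theorem stmt19 (T : ℝ) (hT : 0 < T) (c p2 : ℝ) (hp2 : 0 < p2)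
    (hc : p2 * c ^ 2 ≤ 3 / (4 * (T ^ 2 + 1))) :
    ∀ t ∈ Set.Icc (0:ℝ) T, ∀ x y : Fin 3 → ℝ,
      2 * vdot ((A19 t).mulVec x - (A19 t).mulVec y) (F19 t x - F19 t y) +
        p2 * mnorm (G19 c t x - G19 c t y) ^ 2 ≤
        10 * vnorm (x - y) ^ 2 :=
  stmt19_general T c p2 hp2 hc
end
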